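/- arXiv:2306.06817 — 4 statements merged into one kernel-verified Lean document; each statement's English description precedes it below -/
import Mathlib

section
/- Let R be a ring, E an R-module, B a submodule, A = E/B, and suppose the image of Ω : End_R(E;B) → End_R(B) × End_R(A) consists exactly of the pairs (c·id_B, c·id_A) for scalars c in the center of R acting on B and A. Then the ring End_R(E;B) is commutative. -/
/-- The subring `End_R(E;B)` of `End_R(E)` consisting of the endomorphisms
stabilizing the submodule `B`. -/
def endStab {R E : Type*} [Ring R] [AddCommGroup E] [Module R E]
    (B : Submodule R E) : Subring (Module.End R E) where
  carrier := {φ | ∀ x ∈ B, φ x ∈ B}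
  zero_mem' := fun x _ => by simp [B.zero_mem]
  one_mem' := fun x hx => hx
  add_mem' := fun {φ ψ} hφ hψ x hx => by
    simpa using B.add_mem (hφ x hx) (hψ x hx)
  neg_mem' := fun {φ} hφ x hx => by simpa using B.neg_mem (hφ x hx)
  mul_mem' := fun {φ ψ} hφ hψ x hx => hφ _ (hψ x hx)

/-- The ring homomorphism `Ω : End_R(E;B) → End_R(B) × End_R(E/B)`,
`φ ↦ (φ|_B, induced map on E/B)`. -/
def Omega {R E : Type*} [Ring R] [AddCommGroup E] [Module R E]
    (B : Submodule R E) :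
    endStab B →+* (Module.End R B) × (Module.End R (E ⧸ B)) where
  toFun φ := ((φ : Module.End R E).restrict φ.2,
    Submodule.mapQ B B (φ : Module.End R E) (fun x hx => φ.2 x hx))
  map_one' := by
    refine Prod.ext ?_ ?_
    · ext x; rfl
    · refine LinearMap.ext fun x => ?_
      obtain ⟨y, rfl⟩ := Submodule.Quotient.mk_surjective B x
      simp [Submodule.mapQ_apply]
  map_mul' φ ψ := by
    refine Prod.ext ?_ ?_
    · ext x; rfl
    · refine LinearMap.ext fun x => ?_
      obtain ⟨y, rfl⟩ := Submodule.Quotient.mk_surjective B x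
      simp [Submodule.mapQ_apply]
  map_zero' := by
    refine Prod.ext ?_ ?_
    · ext x; rfl
    · refine LinearMap.ext fun x => ?_
      obtain ⟨y, rfl⟩ := Submodule.Quotient.mk_surjective B x
      simp [Submodule.mapQ_apply]
  map_add' φ ψ := by
    refine Prod.ext ?_ ?_
    · ext x; rfl
    · refine LinearMap.ext fun x => ?_
      obtain ⟨y, rfl⟩ := Submodule.Quotient.mk_surjective B x
      simp [Submodule.mapQ_apply]

/-
Write `φ = c + α` and `ψ = d + β` with scalars `c, d` read off from `Ω`. Since `Ω(φ)` is scalar on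
both `B` and `E/B`, `α` maps `E` into `B` and vanishes on `B`, and likewise `β`; hence
`α β = β α = 0`, and `φ ψ = c d + c β + d α = ψ φ` because scalars are central.
-/

theorem Commute.of_mul_sub_smul_one_eq_zero {R A : Type*} [CommSemiring R] [Ring A] [Algebra R A]
    {a b : A} {c d : R} (hab : (a - c • 1) * (b - d • 1) = 0)
    (hba : (b - d • 1) * (a - c • 1) = 0) : Commute a b := by
  have key : Commute (a - c • 1) (b - d • 1) := hab.trans hba.symm
  have hc : ∀ x : A, Commute (c • (1 : A)) x := fun x => (Commute.one_left x).smul_left c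
  have hd : ∀ x : A, Commute x (d • (1 : A)) := fun x => (Commute.one_right x).smul_right d
  rw [← sub_add_cancel a (c • 1), ← sub_add_cancel b (d • 1)]
  exact ((key.add_right (hd _)).add_left ((hc _).add_right (hd _)))

namespace LinearMap

variable {R E : Type*} [CommRing R] [AddCommGroup E] [Module R E] {B : Submodule R E}
  {f g : Module.End R E} {c d : R}

theorem apply_eq_smul_of_restrict_eq_smul_one (hf : ∀ x ∈ B, f x ∈ B)
    (h : f.restrict hf = c • 1) {x : E} (hx : x ∈ B) : f x = c • x :=
  congrArg Subtype.val (LinearMap.congr_fun h ⟨x, hx⟩)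

theorem apply_sub_smul_mem_of_mapQ_eq_smul_one (hf : ∀ x ∈ B, f x ∈ B)
    (h : B.mapQ B f hf = c • 1) (x : E) : f x - c • x ∈ B := by
  rw [← Submodule.Quotient.eq, Submodule.Quotient.mk_smul]
  exact LinearMap.congr_fun h (Submodule.Quotient.mk x)

theorem sub_smul_one_mul_sub_smul_one_eq_zero (hf : ∀ x ∈ B, f x ∈ B) (hg : ∀ x ∈ B, g x ∈ B)
    (hfc : f.restrict hf = c • 1) (hgd : B.mapQ B g hg = d • 1) :
    (f - c • 1) * (g - d • 1) = 0 := by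
  ext x
  simpa [sub_eq_zero] using
    apply_eq_smul_of_restrict_eq_smul_one hf hfc (apply_sub_smul_mem_of_mapQ_eq_smul_one hg hgd x)

end LinearMap

/-- If the image of `Ω : End_R(E;B) → End_R(B) × End_R(E/B)` consists exactly
of the pairs `(c • id_B, c • id_{E/B})` for scalars `c`, then the ring
`End_R(E;B)` is commutative. -/
theorem stmt6 {R E : Type*} [CommRing R] [AddCommGroup E] [Module R E]
    (B : Submodule R E)
    (h : Set.range (Omega B) =
      {p : (Module.End R B) × (Module.End R (E ⧸ B)) |
        ∃ c : R, p = (c • (1 : Module.End R B), c • (1 : Module.End R (E ⧸ B)))}) :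
    ∀ φ ψ : endStab B, φ * ψ = ψ * φ := by
  intro φ ψ
  obtain ⟨c, hc⟩ : Omega B φ ∈ _ := h ▸ Set.mem_range_self φ
  obtain ⟨d, hd⟩ : Omega B ψ ∈ _ := h ▸ Set.mem_range_self ψ
  have hφψ := LinearMap.sub_smul_one_mul_sub_smul_one_eq_zero φ.2 ψ.2
    (congrArg Prod.fst hc) (congrArg Prod.snd hd)
  have hψφ := LinearMap.sub_smul_one_mul_sub_smul_one_eq_zero ψ.2 φ.2
    (congrArg Prod.fst hd) (congrArg Prod.snd hc)
  exact Subtype.ext (Commute.of_mul_sub_smul_one_eq_zero hφψ hψφ).eq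
end

section
/- Let K be a field, G = {[[1,a,b],[0,1,a],[0,0,1]] : a,b ∈ K} acting on E = K³, and B = span(e₁,e₂). For every proper G-subrepresentation C of B, the extension of the trivial representation K by B/C obtained as the image of E/C (i.e., the short exact sequence 0 → B/C → E/C → K → 0) does not split as a sequence of G-representations. -/
/-! Choose a lift `x ∈ E` of the image `s 1` of a `G`-equivariant section; then `x 2 = 1`
and every `g • x - x` lies in `C`. For the matrix `g` with parameters `a, b` one gets
`g • x - x = (a x₁ + b, a, 0)`, and these vectors exhaust `B = ker (proj 2)`, so `B ≤ C`. -/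

open Matrix in
theorem exists_mulVec_unitriangular_sub_self_eq {R : Type*} [CommRing R] {x y : Fin 3 → R}
    (hx : x 2 = 1) (hy : y 2 = 0) :
    ∃ a b : R, !![1, a, b; 0, 1, a; 0, 0, 1] *ᵥ x - x = y := by
  refine ⟨y 1, y 0 - y 1 * x 1, ?_⟩
  ext i
  fin_cases i <;> simp [dotProduct, Fin.sum_univ_three, hx, hy]

/-- Total nonsplitting: for the unitriangular group
`G = {[[1,a,b],[0,1,a],[0,0,1]]}` acting on `E = K³` with
`B = span(e₀,e₁) = ker(proj 2)`, for every proper `G`-stable subspace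
`C < B`, the short exact sequence `0 → B/C → E/C → K → 0` admits no
`G`-equivariant splitting, i.e. the map `E/C → K` induced by `proj 2`
admits no `G`-equivariant linear section. -/
theorem stmt10 {K : Type*} [Field K]
    (C : Submodule K (Fin 3 → K))
    (hC : ∀ a b : K, ∀ x ∈ C,
      (Matrix.mulVecLin !![1, a, b; 0, 1, a; 0, 0, 1]) x ∈ C)
    (hCB : C < LinearMap.ker (LinearMap.proj 2 : (Fin 3 → K) →ₗ[K] K)) :
    ¬ ∃ s : K →ₗ[K] ((Fin 3 → K) ⧸ C),
      (Submodule.liftQ C (LinearMap.proj 2 : (Fin 3 → K) →ₗ[K] K) hCB.le) ∘ₗ s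
        = LinearMap.id ∧
      ∀ a b : K,
        (Submodule.mapQ C C (Matrix.mulVecLin !![1, a, b; 0, 1, a; 0, 0, 1])
          (fun x hx => hC a b x hx)) ∘ₗ s = s := by
  rintro ⟨s, hsec, hequiv⟩
  obtain ⟨x, hx⟩ := Submodule.Quotient.mk_surjective C (s 1)
  have hx2 : x 2 = 1 := by
    simpa [← hx] using LinearMap.congr_fun hsec 1
  have hmem (a b : K) : Matrix.mulVec !![1, a, b; 0, 1, a; 0, 0, 1] x - x ∈ C := by
    have := LinearMap.congr_fun (hequiv a b) 1
    rw [LinearMap.comp_apply, ← hx, Submodule.mapQ_apply] at this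
    exact (Submodule.Quotient.eq C).mp this
  refine hCB.not_ge fun y hy => ?_
  obtain ⟨a, b, rfl⟩ := exists_mulVec_unitriangular_sub_self_eq hx2 hy
  exact hmem a b
end

section
/- Let G be a group, K a field of characteristic zero, and 0 → B → E →π→ A → 0 an exact sequence of finite-dimensional K[G]-modules with A, B nonzero. Suppose that for every G-equivariant endomorphism Φ of Hom(A,E)† stabilizing Hom_K(A,B), the pair of induced maps (on Hom_K(A,B) and on the one-dimensional quotient) is (c·id, c·id) for some c ∈ K. Then for every G-equivariant endomorphism φ of E with φ(B) ⊆ B, the induced maps φ_B on B and φ_A on A are both equal to a·id for a common scalar a ∈ K. -/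
/-!
`φ` induces `ψ` on `A = E/B`, and `Φ f = φ ∘ f - f ∘ ψ` is a `G`-equivariant endomorphism of
`Hom(A,E)†` with values in `Hom_K(A,B)`. The hypothesis makes `Φ` act by a scalar `c`; since a
section of `π` maps to `id` in the quotient while `Φ` kills the quotient, `c = 0`. Hence
`φ_B ∘ f = f ∘ ψ` for every `f : A → B`, and testing this on rank-one maps shows that
`φ_B` and `ψ` are the same scalar.
-/

/-- `Hom(A,E)† = {f : A →ₗ[K] E | π ∘ f is a scalar multiple of id_A}`,
as a subspace of `Hom_K(A,E)`. -/
def dagger {K A E : Type*} [Field K]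
    [AddCommGroup A] [Module K A] [AddCommGroup E] [Module K E]
    (π : E →ₗ[K] A) : Submodule K (A →ₗ[K] E) where
  carrier := {f | ∃ c : K, π ∘ₗ f = c • (LinearMap.id : A →ₗ[K] A)}
  zero_mem' := ⟨0, by simp⟩
  add_mem' := by
    rintro f g ⟨c, hc⟩ ⟨d, hd⟩
    exact ⟨c + d, by rw [LinearMap.comp_add, hc, hd, add_smul]⟩
  smul_mem' := by
    rintro c f ⟨d, hd⟩
    exact ⟨c * d, by rw [LinearMap.comp_smul, hd, smul_smul]⟩

section LinearAlgebra

variable {K M N : Type*} [Field K] [AddCommGroup M] [Module K M] [AddCommGroup N] [Module K N]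

theorem exists_eq_smul_id_of_forall_comp_eq_comp [Nontrivial M] [Nontrivial N]
    (u : Module.End K M) (v : Module.End K N) (h : ∀ f : M →ₗ[K] N, v ∘ₗ f = f ∘ₗ u) :
    ∃ a : K, u = a • LinearMap.id ∧ v = a • LinearMap.id := by
  have rank_one : ∀ (l : Module.Dual K M) (n : N) (x : M), l x • v n = l (u x) • n := by
    intro l n x
    simpa using LinearMap.ext_iff.mp (h (l.smulRight n)) x
  obtain ⟨m₀, hm₀⟩ := exists_ne (0 : M)
  obtain ⟨l₀, hl₀⟩ := Module.Projective.exists_dual_eq_one K hm₀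
  set a := l₀ (u m₀)
  have hv : v = a • LinearMap.id := LinearMap.ext fun n => by
    simpa [hl₀] using rank_one l₀ n m₀
  refine ⟨a, LinearMap.ext fun x => ?_, hv⟩
  obtain ⟨n₀, hn₀⟩ := exists_ne (0 : N)
  rw [← sub_eq_zero, ← Module.forall_dual_apply_eq_zero_iff K]
  intro l
  have hl := rank_one l n₀ x
  rw [hv, LinearMap.smul_apply, LinearMap.id_apply, smul_smul, ← sub_eq_zero, ← sub_smul,
    smul_eq_zero_iff_left hn₀] at hl
  simp only [LinearMap.smul_apply, LinearMap.id_apply, map_sub, map_smul, smul_eq_mul]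
  linear_combination -hl

variable {E A : Type*} [AddCommGroup E] [Module K E] [AddCommGroup A] [Module K A]

theorem exists_comp_eq_comp_of_mapsTo_ker {π : E →ₗ[K] A} (hπ : Function.Surjective π)
    {φ : Module.End K E} (hφ : ∀ x ∈ LinearMap.ker π, φ x ∈ LinearMap.ker π) :
    ∃ ψ : Module.End K A, π ∘ₗ φ = ψ ∘ₗ π := by
  obtain ⟨s, hs⟩ := π.exists_rightInverse_of_surjective (LinearMap.range_eq_top.mpr hπ)
  refine ⟨π ∘ₗ φ ∘ₗ s, LinearMap.ext fun x => ?_⟩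
  have hx : s (π x) - x ∈ LinearMap.ker π := by
    simp [← LinearMap.comp_apply π s, hs]
  have h := hφ _ hx
  simp only [LinearMap.mem_ker, map_sub, sub_eq_zero] at h
  exact h.symm

theorem comp_commute_of_comp_eq_comp {π : E →ₗ[K] A} (hπ : Function.Surjective π)
    {φ α : Module.End K E} {ψ β : Module.End K A} (hψ : π ∘ₗ φ = ψ ∘ₗ π)
    (hβ : π ∘ₗ α = β ∘ₗ π) (hφα : φ ∘ₗ α = α ∘ₗ φ) : ψ ∘ₗ β = β ∘ₗ ψ := by
  refine (LinearMap.cancel_right hπ).mp (LinearMap.ext fun x => ?_)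
  calc ψ (β (π x)) = ψ (π (α x)) := congrArg ψ (LinearMap.congr_fun hβ x).symm
    _ = π (φ (α x)) := (LinearMap.congr_fun hψ _).symm
    _ = π (α (φ x)) := congrArg π (LinearMap.congr_fun hφα x)
    _ = β (π (φ x)) := LinearMap.congr_fun hβ _
    _ = β (ψ (π x)) := congrArg β (LinearMap.congr_fun hψ x)

end LinearAlgebra

section Dagger

variable {K A E : Type*} [Field K] [AddCommGroup A] [Module K A] [AddCommGroup E] [Module K E]

def twistedCommutator (φ : Module.End K E) (ψ : Module.End K A) :
    Module.End K (A →ₗ[K] E) :=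
  LinearMap.llcomp K A E E φ - LinearMap.lcomp K E ψ

theorem twistedCommutator_apply (φ : Module.End K E) (ψ : Module.End K A) (f : A →ₗ[K] E) :
    twistedCommutator φ ψ f = φ ∘ₗ f - f ∘ₗ ψ :=
  rfl

theorem mem_dagger_of_comp_eq_zero {π : E →ₗ[K] A} {f : A →ₗ[K] E} (hf : π ∘ₗ f = 0) :
    f ∈ dagger π :=
  ⟨0, by rw [hf, zero_smul]⟩

variable {π : E →ₗ[K] A} {φ : Module.End K E} {ψ : Module.End K A}

theorem comp_twistedCommutator_eq_zero (hψ : π ∘ₗ φ = ψ ∘ₗ π) {f : A →ₗ[K] E}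
    (hf : f ∈ dagger π) : π ∘ₗ twistedCommutator φ ψ f = 0 := by
  obtain ⟨c, hc⟩ := hf
  rw [twistedCommutator_apply, LinearMap.comp_sub, ← LinearMap.comp_assoc, hψ,
    LinearMap.comp_assoc f π ψ, ← LinearMap.comp_assoc ψ f π, hc]
  ext
  simp

theorem twistedCommutator_mem_dagger (hψ : π ∘ₗ φ = ψ ∘ₗ π) :
    ∀ f ∈ dagger π, twistedCommutator φ ψ f ∈ dagger π :=
  fun _ hf => mem_dagger_of_comp_eq_zero (comp_twistedCommutator_eq_zero hψ hf)

theorem twistedCommutator_linHom {G : Type*} [Group G] {ρA : Representation K G A}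
    {ρE : Representation K G E} {g : G} (hφ : φ ∘ₗ ρE g = ρE g ∘ₗ φ)
    (hψ : ψ ∘ₗ ρA g⁻¹ = ρA g⁻¹ ∘ₗ ψ) (f : A →ₗ[K] E) :
    twistedCommutator φ ψ (ρA.linHom ρE g f) = ρA.linHom ρE g (twistedCommutator φ ψ f) := by
  simp only [twistedCommutator_apply, Representation.linHom_apply, LinearMap.comp_sub,
    LinearMap.sub_comp, ← LinearMap.comp_assoc, hφ]
  simp only [LinearMap.comp_assoc, hψ]

end Dagger

theorem stmt15_general {K G A E : Type*} [Field K] [Group G]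
    [AddCommGroup A] [Module K A] [Nontrivial A]
    [AddCommGroup E] [Module K E]
    (ρA : Representation K G A) (ρE : Representation K G E)
    (π : E →ₗ[K] A) (hsurj : Function.Surjective π)
    (hπ : ∀ g : G, π ∘ₗ ρE g = ρA g ∘ₗ π)
    (hB : LinearMap.ker π ≠ ⊥)
    (hyp : ∀ Φ : ↥(dagger π) →ₗ[K] ↥(dagger π),
      -- `Φ` is `G`-equivariant for the conjugation action on `Hom(A,E)†`
      (∀ (g : G) (f f' : ↥(dagger π)),
        (f' : A →ₗ[K] E) = (ρA.linHom ρE) g (f : A →ₗ[K] E) →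
        ((Φ f' : A →ₗ[K] E)) = (ρA.linHom ρE) g ((Φ f : A →ₗ[K] E))) →
      -- `Φ` stabilizes `Hom_K(A,B)`
      (∀ f : ↥(dagger π), π ∘ₗ (f : A →ₗ[K] E) = 0 →
        π ∘ₗ ((Φ f : A →ₗ[K] E)) = 0) →
      -- then the pair induced by `Φ` is `(c • id, c • id)` for some scalar `c`
      ∃ c : K,
        (∀ f : ↥(dagger π), π ∘ₗ (f : A →ₗ[K] E) = 0 →
          ((Φ f : A →ₗ[K] E)) = c • (f : A →ₗ[K] E)) ∧
        (∀ f : ↥(dagger π),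
          π ∘ₗ ((Φ f : A →ₗ[K] E)) = c • (π ∘ₗ (f : A →ₗ[K] E)))) :
    ∀ φ : E →ₗ[K] E, (∀ g : G, φ ∘ₗ ρE g = ρE g ∘ₗ φ) →
      (∀ x ∈ LinearMap.ker π, φ x ∈ LinearMap.ker π) →
      ∃ a : K, (∀ x ∈ LinearMap.ker π, φ x = a • x) ∧
        (∀ x : E, π (φ x) = a • π x) := by
  intro φ hφG hφB
  obtain ⟨ψ, hψ⟩ := exists_comp_eq_comp_of_mapsTo_ker hsurj hφB
  have hψG (g : G) : ψ ∘ₗ ρA g = ρA g ∘ₗ ψ :=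
    comp_commute_of_comp_eq_comp hsurj hψ (hπ g) (hφG g)
  obtain ⟨c, hc_sub, hc_quot⟩ := hyp ((twistedCommutator φ ψ).restrict
      (twistedCommutator_mem_dagger hψ))
    (fun g f f' hf' => by
      simp only [LinearMap.coe_restrict_apply, hf', twistedCommutator_linHom (hφG g) (hψG g⁻¹)])
    (fun f _ => comp_twistedCommutator_eq_zero hψ f.2)
  -- `Φ` takes values in `Hom_K(A,B)`, whereas a section of `π` has image `id` in the quotient
  obtain ⟨s, hs⟩ := π.exists_rightInverse_of_surjective (LinearMap.range_eq_top.mpr hsurj)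
  have hs_mem : s ∈ dagger π := ⟨1, by rw [hs, one_smul]⟩
  have hc : c = 0 := by
    have h := hc_quot ⟨s, hs_mem⟩
    rw [LinearMap.coe_restrict_apply, comp_twistedCommutator_eq_zero hψ hs_mem, hs] at h
    exact (smul_eq_zero_iff_left (one_ne_zero (α := Module.End K A))).mp h.symm
  have : Nontrivial (LinearMap.ker π) := Submodule.nontrivial_iff_ne_bot.mpr hB
  obtain ⟨a, hψa, hφa⟩ := exists_eq_smul_id_of_forall_comp_eq_comp ψ (φ.restrict hφB) fun f => by
    have hf : π ∘ₗ (LinearMap.ker π).subtype ∘ₗ f = 0 := by ext; simp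
    have h := hc_sub ⟨_, mem_dagger_of_comp_eq_zero hf⟩ hf
    rw [hc, zero_smul, LinearMap.coe_restrict_apply, twistedCommutator_apply, sub_eq_zero] at h
    ext x
    exact LinearMap.congr_fun h x
  refine ⟨a, fun x hx => ?_, fun x => ?_⟩
  · simpa using congr(($hφa ⟨x, hx⟩ : E))
  · simpa [hψa] using LinearMap.congr_fun hψ x

/-- Reduction of the theorems to the case `A = 𝟙`: let
`0 → B → E →π→ A → 0` be an exact sequence of finite-dimensional
representations of `G` over a field `K` of characteristic zero, with `A`, `B`
nonzero. Suppose that every `G`-equivariant endomorphism `Φ` of `Hom(A,E)†`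
stabilizing `Hom_K(A,B) = {f : π ∘ f = 0}` induces a pair `(c • id, c • id)`
on `Hom_K(A,B)` and on the one-dimensional quotient. Then every
`G`-equivariant endomorphism `φ` of `E` stabilizing `B = ker π` induces
`a • id` on both `B` and `A`, for a common scalar `a`. -/
theorem stmt15 {K G A E : Type*} [Field K] [CharZero K] [Group G]
    [AddCommGroup A] [Module K A] [FiniteDimensional K A] [Nontrivial A]
    [AddCommGroup E] [Module K E] [FiniteDimensional K E]
    (ρA : Representation K G A) (ρE : Representation K G E)
    (π : E →ₗ[K] A) (hsurj : Function.Surjective π)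
    (hπ : ∀ g : G, π ∘ₗ ρE g = ρA g ∘ₗ π)
    (hB : LinearMap.ker π ≠ ⊥)
    (hyp : ∀ Φ : ↥(dagger π) →ₗ[K] ↥(dagger π),
      -- `Φ` is `G`-equivariant for the conjugation action on `Hom(A,E)†`
      (∀ (g : G) (f f' : ↥(dagger π)),
        (f' : A →ₗ[K] E) = (ρA.linHom ρE) g (f : A →ₗ[K] E) →
        ((Φ f' : A →ₗ[K] E)) = (ρA.linHom ρE) g ((Φ f : A →ₗ[K] E))) →
      -- `Φ` stabilizes `Hom_K(A,B)`
      (∀ f : ↥(dagger π), π ∘ₗ (f : A →ₗ[K] E) = 0 →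
        π ∘ₗ ((Φ f : A →ₗ[K] E)) = 0) →
      -- then the pair induced by `Φ` is `(c • id, c • id)` for some scalar `c`
      ∃ c : K,
        (∀ f : ↥(dagger π), π ∘ₗ (f : A →ₗ[K] E) = 0 →
          ((Φ f : A →ₗ[K] E)) = c • (f : A →ₗ[K] E)) ∧
        (∀ f : ↥(dagger π),
          π ∘ₗ ((Φ f : A →ₗ[K] E)) = c • (π ∘ₗ (f : A →ₗ[K] E)))) :
    ∀ φ : E →ₗ[K] E, (∀ g : G, φ ∘ₗ ρE g = ρE g ∘ₗ φ) →
      (∀ x ∈ LinearMap.ker π, φ x ∈ LinearMap.ker π) →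
      ∃ a : K, (∀ x ∈ LinearMap.ker π, φ x = a • x) ∧
        (∀ x : E, π (φ x) = a • π x) :=
  stmt15_general ρA ρE π hsurj hπ hB hyp
end

section
/- Let K be a field and G a group. Suppose E is a finite-dimensional G-representation with subrepresentation B such that E/B is the trivial one-dimensional representation, and suppose the extension 0 → B → E → K → 0 is totally nonsplit, meaning: for every proper subrepresentation C ⊊ B, the induced sequence 0 → B/C → E/C → K → 0 has no G-equivariant splitting. If additionally every G-map E → B has kernel not contained in B, then every G-equivariant endomorphism φ of E with φ(B) ⊆ B satisfies: φ acts on B and on E/B by the same scalar a ∈ K. (Assume char K = 0.) -/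
/-! Write `π ∘ φ = a • π` and `ψ = φ - a`. Then `ψ` is a `G`-map `E → B`, so by hypothesis some
`v ∈ ker ψ` has `π v ≠ 0`. The submodule `C = ker ψ ⊓ B` is `G`-stable, and `v` is `G`-invariant
modulo `C`, so `t ↦ (t / π v) • [v]` is an equivariant section of `E/C → K`. Total nonsplitting
forces `C = B`, i.e. `ψ` vanishes on `B`. -/

open LinearMap

section

variable {K G E : Type*} [Field K] [AddCommGroup E] [Module K E]

theorem LinearMap.exists_comp_eq_smul_of_mapsTo_ker (π : E →ₗ[K] K) (φ : E →ₗ[K] E)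
    (hφ : ∀ x ∈ ker π, φ x ∈ ker π) : ∃ a : K, π ∘ₗ φ = a • π := by
  have hker : ⨅ _ : Unit, ker π ≤ ker (π ∘ₗ φ) := by
    rw [iInf_const, ker_comp]
    exact hφ
  obtain ⟨a, ha⟩ := Submodule.mem_span_singleton.mp <| by
    simpa using mem_span_of_iInf_ker_le_ker hker
  exact ⟨a, ha.symm⟩

variable [Monoid G] (ρ : Representation K G E)

theorem exists_equivariant_section_of_invariant_mod {π : E →ₗ[K] K} {C : Submodule K E}
    (hCπ : C ≤ ker π) (hC : ∀ g : G, ∀ x ∈ C, ρ g x ∈ C) {v : E} (hv : π v ≠ 0)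
    (hinv : ∀ g : G, ρ g v - v ∈ C) :
    ∃ s : K →ₗ[K] E ⧸ C,
      C.liftQ π hCπ ∘ₗ s = LinearMap.id ∧ ∀ g : G, C.mapQ C (ρ g) (hC g) ∘ₗ s = s := by
  refine ⟨(π v)⁻¹ • toSpanSingleton K _ (Submodule.Quotient.mk v), ?_, fun g => ?_⟩
  · ext
    simp [inv_mul_cancel₀ hv]
  · ext
    simp [(Submodule.Quotient.eq C).mpr (hinv g)]

theorem ker_le_ker_of_totallyNonsplit {π : E →ₗ[K] K} (hπ : ∀ g : G, π ∘ₗ ρ g = π)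
    (hTNS : ∀ C : Submodule K E, (hC : ∀ g : G, ∀ x ∈ C, ρ g x ∈ C) → (hCB : C < ker π) →
      ¬ ∃ s : K →ₗ[K] (E ⧸ C),
        C.liftQ π hCB.le ∘ₗ s = LinearMap.id ∧ ∀ g : G, C.mapQ C (ρ g) (hC g) ∘ₗ s = s)
    {ψ : E →ₗ[K] E} (hψ : ∀ g : G, ψ ∘ₗ ρ g = ρ g ∘ₗ ψ) {v : E} (hvψ : ψ v = 0)
    (hvπ : π v ≠ 0) : ker π ≤ ker ψ := by
  have hρπ (g : G) (x : E) : π (ρ g x) = π x := congr($(hπ g) x)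
  have hρψ (g : G) (x : E) : ψ (ρ g x) = ρ g (ψ x) := congr($(hψ g) x)
  by_contra hle
  set C := ker ψ ⊓ ker π
  have hCstable (g : G) : ∀ x ∈ C, ρ g x ∈ C := by
    rintro x ⟨hxψ, hxπ⟩
    exact ⟨mem_ker.mpr (by rw [hρψ, mem_ker.mp hxψ, map_zero]),
      mem_ker.mpr (by rw [hρπ, mem_ker.mp hxπ])⟩
  have hCπ : C < ker π := inf_le_right.lt_of_ne fun h => hle (h ▸ inf_le_left)
  have hinv (g : G) : ρ g v - v ∈ C :=
    ⟨by simp [hρψ, hvψ], by simp [hρπ]⟩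
  exact hTNS C hCstable hCπ
    (exists_equivariant_section_of_invariant_mod ρ hCπ.le hCstable hvπ hinv)

end

theorem stmt17_general {K G E : Type*} [Field K] [Group G]
    [AddCommGroup E] [Module K E]
    (ρ : Representation K G E) (B : Submodule K E)
    (π : E →ₗ[K] K)
    (hker : LinearMap.ker π = B)
    (hπ : ∀ g : G, π ∘ₗ ρ g = π)
    -- total nonsplitting
    (hTNS : ∀ C : Submodule K E, (hC : ∀ g : G, ∀ x ∈ C, ρ g x ∈ C) →
      (hCB : C < B) →
      ¬ ∃ s : K →ₗ[K] (E ⧸ C),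
        (Submodule.liftQ C π (hCB.le.trans hker.ge)) ∘ₗ s = LinearMap.id ∧
        ∀ g : G, (Submodule.mapQ C C (ρ g) (fun x hx => hC g x hx)) ∘ₗ s = s)
    -- every `G`-map `E → B` has kernel not contained in `B`
    (hkernels : ∀ lam : E →ₗ[K] E, (∀ g : G, lam ∘ₗ ρ g = ρ g ∘ₗ lam) →
      LinearMap.range lam ≤ B → ¬ LinearMap.ker lam ≤ B) :
    ∀ φ : E →ₗ[K] E, (∀ g : G, φ ∘ₗ ρ g = ρ g ∘ₗ φ) →
      (∀ x ∈ B, φ x ∈ B) →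
      ∃ a : K, (∀ x : E, π (φ x) = a • π x) ∧ (∀ x ∈ B, φ x = a • x) := by
  subst hker
  intro φ hφ hφB
  obtain ⟨a, ha⟩ := π.exists_comp_eq_smul_of_mapsTo_ker φ hφB
  refine ⟨a, fun x => congr($ha x), ?_⟩
  set ψ := φ - a • LinearMap.id
  have hψ (g : G) : ψ ∘ₗ ρ g = ρ g ∘ₗ ψ := by
    ext x
    have hφx : φ (ρ g x) = ρ g (φ x) := congr($(hφ g) x)
    simp [ψ, hφx]
  have hψπ : range ψ ≤ ker π := by
    rintro _ ⟨x, rfl⟩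
    have hπφx : π (φ x) = a * π x := congr($ha x)
    simp [ψ, hπφx]
  obtain ⟨v, hvψ, hvπ⟩ := SetLike.not_le_iff_exists.mp (hkernels ψ hψ hψπ)
  have hBψ := ker_le_ker_of_totallyNonsplit ρ hπ hTNS hψ hvψ hvπ
  intro x hx
  simpa [ψ, sub_eq_zero] using hBψ hx

/-- The `A = 𝟙` case of Theorems 2/3 of the paper: let `E` be a
finite-dimensional representation of `G` over a field `K` of characteristic
zero, `B` a subrepresentation with `E/B` the trivial one-dimensional
representation (given by an equivariant surjection `π : E → K` with kernel
`B`). Assume the extension `0 → B → E → K → 0` is totally nonsplit (for every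
`G`-stable `C < B` the induced map `E/C → K` has no `G`-equivariant section)
and that every `G`-equivariant map `E → B` has kernel not contained in `B`.
Then every `G`-equivariant endomorphism `φ` of `E` with `φ(B) ⊆ B` acts on
`B` and on `E/B` by a common scalar `a`. -/
theorem stmt17 {K G E : Type*} [Field K] [CharZero K] [Group G]
    [AddCommGroup E] [Module K E] [FiniteDimensional K E]
    (ρ : Representation K G E) (B : Submodule K E)
    (π : E →ₗ[K] K) (hsurj : Function.Surjective π)
    (hker : LinearMap.ker π = B)
    (hπ : ∀ g : G, π ∘ₗ ρ g = π)
    -- total nonsplitting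
    (hTNS : ∀ C : Submodule K E, (hC : ∀ g : G, ∀ x ∈ C, ρ g x ∈ C) →
      (hCB : C < B) →
      ¬ ∃ s : K →ₗ[K] (E ⧸ C),
        (Submodule.liftQ C π (hCB.le.trans hker.ge)) ∘ₗ s = LinearMap.id ∧
        ∀ g : G, (Submodule.mapQ C C (ρ g) (fun x hx => hC g x hx)) ∘ₗ s = s)
    -- every `G`-map `E → B` has kernel not contained in `B`
    (hkernels : ∀ lam : E →ₗ[K] E, (∀ g : G, lam ∘ₗ ρ g = ρ g ∘ₗ lam) →
      LinearMap.range lam ≤ B → ¬ LinearMap.ker lam ≤ B) :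
    ∀ φ : E →ₗ[K] E, (∀ g : G, φ ∘ₗ ρ g = ρ g ∘ₗ φ) →
      (∀ x ∈ B, φ x ∈ B) →
      ∃ a : K, (∀ x : E, π (φ x) = a • π x) ∧ (∀ x ∈ B, φ x = a • x) :=
  stmt17_general ρ B π hker hπ hTNS hkernels
end
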